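/- There exists a unique ℓ_* ∈ (0, T̃/N) such that h₁(ℓ_*) = h₀(ℓ_*). Moreover the function h = h₁ − h₀ is strictly decreasing on [0, T̃/N], with h(ℓ) > 0 for ℓ ∈ [0, ℓ_*) and h(ℓ) < 0 for ℓ ∈ (ℓ_*, T̃/N]. -/

import Mathlib

/-!
The catastrophe rates `g_*^±` decrease with `ℓ` because `φ` is non-decreasing, and `ψ_α`
increases. Hence `h₁`, a positive decreasing factor times the strictly decreasing saturation
`(T̃ - Nℓ)/(f_{1/2} + T̃ - Nℓ)`, is strictly decreasing on `[0, T̃/N]`, while `h₀`, a product of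
nonnegative increasing factors, is increasing. So `h = h₁ - h₀` is continuous and strictly
decreasing, with `h(0) = h₁(0) > 0` since `ψ_α(0) = 0`, and `h(T̃/N) = -h₀(T̃/N) < 0` since the
saturation vanishes there. The intermediate value theorem gives `ℓ_*`.
-/

open Set Filter Topology Real

theorem AntitoneOn.mul_strictAntiOn {α R : Type*} [Preorder α] [Mul R] [Zero R] [Preorder R]
    [PosMulStrictMono R] [MulPosMono R] {f g : α → R} {s : Set α}
    (hf : AntitoneOn f s) (hg : StrictAntiOn g s) (hf₀ : ∀ x ∈ s, 0 < f x)
    (hg₀ : ∀ x ∈ s, 0 ≤ g x) : StrictAntiOn (fun x => f x * g x) s :=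
  fun _ hx _ hy hxy =>
    (mul_le_mul_of_nonneg_right (hf hx hy hxy.le) (hg₀ _ hy)).trans_lt
      (mul_lt_mul_of_pos_left (hg hx hy hxy) (hf₀ _ hx))

theorem StrictAntiOn.exists_sign_change {α δ : Type*} [ConditionallyCompleteLinearOrder α]
    [TopologicalSpace α] [OrderTopology α] [DenselyOrdered α] [LinearOrder δ]
    [TopologicalSpace δ] [OrderClosedTopology δ] [Zero δ] {f : α → δ} {a b : α} (hab : a ≤ b)
    (hf : StrictAntiOn f (Icc a b)) (hfc : ContinuousOn f (Icc a b)) (ha : 0 < f a)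
    (hb : f b < 0) :
    ∃ x ∈ Ioo a b, f x = 0 ∧ (∀ y ∈ Ioo a b, f y = 0 → y = x) ∧
      (∀ y ∈ Ico a x, 0 < f y) ∧ ∀ y ∈ Ioc x b, f y < 0 := by
  obtain ⟨x, hx, hx0⟩ := intermediate_value_Ioo' hab hfc ⟨hb, ha⟩
  have hxI : x ∈ Icc a b := Ioo_subset_Icc_self hx
  refine ⟨x, hx, hx0, fun y hy hy0 => hf.injOn (Ioo_subset_Icc_self hy) hxI (hy0.trans hx0.symm),
    fun y hy => ?_, fun y hy => ?_⟩
  · exact hx0 ▸ hf ⟨hy.1, hy.2.le.trans hxI.2⟩ hxI hy.2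
  · exact hx0 ▸ hf hxI ⟨hxI.1.trans hy.1.le, hy.2⟩ hy.1

theorem strictMonoOn_div_add_left {K : ℝ} (hK : 0 < K) :
    StrictMonoOn (fun t => t / (K + t)) (Ioi (-K)) := by
  intro s hs t ht hst
  have hs' : 0 < K + s := by linarith [mem_Ioi.1 hs]
  have ht' : 0 < K + t := by linarith [mem_Ioi.1 ht]
  rw [div_lt_div_iff₀ hs' ht']
  nlinarith

theorem sub_mul_nonneg_of_mem_Icc {N T ℓ : ℝ} (hN : 0 < N) (hℓ : ℓ ∈ Icc 0 (T / N)) :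
    0 ≤ T - N * ℓ := by
  linarith [(le_div_iff₀' hN).1 hℓ.2]

theorem strictAntiOn_mul_saturation {A : ℝ → ℝ} {K N T : ℝ} (hA : AntitoneOn A (Ici 0))
    (hA₀ : ∀ ℓ, 0 < A ℓ) (hK : 0 < K) (hN : 0 < N) :
    StrictAntiOn (fun ℓ => A ℓ * ((T - N * ℓ) / (K + (T - N * ℓ)))) (Icc 0 (T / N)) := by
  refine (hA.mono Icc_subset_Ici_self).mul_strictAntiOn ?_ (fun ℓ _ => hA₀ ℓ)
    fun ℓ hℓ => by have := sub_mul_nonneg_of_mem_Icc hN hℓ; positivity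
  exact (strictMonoOn_div_add_left hK).comp_strictAntiOn
    (fun x _ y _ hxy => by nlinarith)
    fun ℓ hℓ => by have := sub_mul_nonneg_of_mem_Icc hN hℓ; simp only [mem_Ioi]; linarith

section ExpNegRpow

variable {ψ : ℝ → ℝ} {c α : ℝ}

theorem nonneg_of_eq_exp_neg_div_rpow (hψ0 : ψ 0 = 0)
    (hψ : ∀ x, 0 < x → ψ x = exp (-(c / x) ^ α)) {x : ℝ} (hx : 0 ≤ x) : 0 ≤ ψ x := by
  rcases hx.eq_or_lt with rfl | hx
  · exact hψ0.ge
  · exact hψ x hx ▸ (exp_pos _).le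

theorem monotoneOn_of_eq_exp_neg_div_rpow (hc : 0 ≤ c) (hα : 0 ≤ α) (hψ0 : ψ 0 = 0)
    (hψ : ∀ x, 0 < x → ψ x = exp (-(c / x) ^ α)) : MonotoneOn ψ (Ici 0) := by
  intro x hx y hy hxy
  rcases (mem_Ici.1 hx).eq_or_lt with rfl | hx0
  · exact hψ0.le.trans (nonneg_of_eq_exp_neg_div_rpow hψ0 hψ hy)
  rw [hψ x hx0, hψ y (hx0.trans_le hxy)]
  gcongr
  exact div_nonneg hc (hx0.trans_le hxy).le

theorem continuousOn_of_eq_exp_neg_div_rpow (hc : 0 < c) (hα : 0 < α) (hψ0 : ψ 0 = 0)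
    (hψ : ∀ x, 0 < x → ψ x = exp (-(c / x) ^ α)) : ContinuousOn ψ (Ici 0) := by
  intro x hx
  rcases (mem_Ici.1 hx).eq_or_lt with rfl | hx0
  · rw [← continuousWithinAt_Ioi_iff_Ici, ContinuousWithinAt, hψ0]
    have hblow : Tendsto (fun x => c / x) (𝓝[>] 0) atTop := by
      simpa only [div_eq_mul_inv] using tendsto_inv_nhdsGT_zero.const_mul_atTop hc
    exact (tendsto_exp_neg_atTop_nhds_zero.comp ((tendsto_rpow_atTop hα).comp hblow)).congr'
      (eventually_nhdsWithin_of_forall fun y hy => (hψ y hy).symm)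
  · have hcont : ContinuousAt (fun y => exp (-(c / y) ^ α)) x :=
      ((continuousAt_const.div continuousAt_id hx0.ne').rpow_const (Or.inr hα.le)).neg.rexp
    exact (hcont.congr ((eventually_gt_nhds hx0).mono fun y hy => (hψ y hy).symm)
      ).continuousWithinAt

end ExpNegRpow

noncomputable def gStar (φ : ℝ → ℝ) (lamMin η lam l0 ℓ : ℝ) : ℝ :=
  1 / (1 + max lamMin ((1 + η * φ (ℓ / l0)) * lam))

section gStar

variable {φ : ℝ → ℝ} {lamMin η lam l0 : ℝ}

theorem gStar_pos (hm : 0 ≤ lamMin) (ℓ : ℝ) : 0 < gStar φ lamMin η lam l0 ℓ := by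
  have := le_max_left lamMin ((1 + η * φ (ℓ / l0)) * lam)
  unfold gStar
  positivity

theorem gStar_lt_one (hm : 0 < lamMin) (ℓ : ℝ) : gStar φ lamMin η lam l0 ℓ < 1 := by
  have := le_max_left lamMin ((1 + η * φ (ℓ / l0)) * lam)
  rw [gStar, div_lt_one (by linarith)]
  linarith

theorem gStar_antitoneOn (hφ : MonotoneOn φ (Ici 0)) (hm : 0 ≤ lamMin) (hη : 0 ≤ η)
    (hlam : 0 ≤ lam) (hl0 : 0 ≤ l0) : AntitoneOn (gStar φ lamMin η lam l0) (Ici 0) := by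
  intro x hx y hy hxy
  have := le_max_left lamMin ((1 + η * φ (x / l0)) * lam)
  unfold gStar
  gcongr
  exact hφ (div_nonneg hx hl0) (div_nonneg hy hl0) (by gcongr)

theorem gStar_continuousOn (hφ : ContinuousOn φ (Ici 0)) (hm : 0 ≤ lamMin) (hl0 : 0 ≤ l0) :
    ContinuousOn (gStar φ lamMin η lam l0) (Ici 0) := by
  have hφl : ContinuousOn (fun ℓ => φ (ℓ / l0)) (Ici 0) :=
    hφ.comp (continuousOn_id.div_const l0) fun ℓ hℓ => div_nonneg hℓ hl0
  refine continuousOn_const.div (continuousOn_const.add (ContinuousOn.sup continuousOn_const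
    ((continuousOn_const.add (continuousOn_const.mul hφl)).mul continuousOn_const))) fun ℓ _ => ?_
  have := le_max_left lamMin ((1 + η * φ (ℓ / l0)) * lam)
  positivity

end gStar

section Balance

variable {gp gm ψ : ℝ → ℝ} {vp vg vs K N T lcrit : ℝ}

theorem strictAntiOn_growth (hgp : AntitoneOn gp (Ici 0)) (hgm : AntitoneOn gm (Ici 0))
    (hgp₀ : ∀ ℓ, 0 < gp ℓ) (hgm₀ : ∀ ℓ, 0 < gm ℓ) (hvp : 0 < vp) (hvg : 0 < vg) (hK : 0 < K)
    (hN : 0 < N) :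
    StrictAntiOn (fun ℓ => vp * (gp ℓ + gm ℓ / vg) * ((T - N * ℓ) / (K + (T - N * ℓ))))
      (Icc 0 (T / N)) :=
  strictAntiOn_mul_saturation
    (fun x hx y hy hxy => by gcongr; exacts [hgp hx hy hxy, hgm hx hy hxy])
    (fun ℓ => by have := hgp₀ ℓ; have := hgm₀ ℓ; positivity) hK hN

theorem continuousOn_growth (hgp : ContinuousOn gp (Ici 0)) (hgm : ContinuousOn gm (Ici 0))
    (hK : 0 < K) (hN : 0 < N) :
    ContinuousOn (fun ℓ => vp * (gp ℓ + gm ℓ / vg) * ((T - N * ℓ) / (K + (T - N * ℓ))))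
      (Icc 0 (T / N)) := by
  have hsub : Icc 0 (T / N) ⊆ Ici 0 := Icc_subset_Ici_self
  have hgp' := hgp.mono hsub
  have hgm' := hgm.mono hsub
  refine ContinuousOn.mul (by fun_prop) (ContinuousOn.div (by fun_prop) (by fun_prop) ?_)
  intro ℓ hℓ
  have := sub_mul_nonneg_of_mem_Icc hN hℓ
  positivity

theorem monotoneOn_shrink (hgp : AntitoneOn gp (Ici 0)) (hgm : AntitoneOn gm (Ici 0))
    (hgp₁ : ∀ ℓ, gp ℓ ≤ 1) (hgm₁ : ∀ ℓ, gm ℓ ≤ 1) (hvs : 0 < vs) (hψ : MonotoneOn ψ (Ici 0))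
    (hψ₀ : ∀ {x}, 0 ≤ x → 0 ≤ ψ x) (hl : 0 ≤ lcrit) :
    MonotoneOn (fun ℓ => ((1 - gp ℓ) + (1 - gm ℓ) / vs) * ψ (ℓ / lcrit)) (Ici 0) := by
  refine MonotoneOn.mul (fun x hx y hy hxy => ?_)
    (hψ.comp (fun x _ y _ hxy => by gcongr) fun ℓ hℓ => div_nonneg hℓ hl)
    (fun ℓ _ => ?_) fun ℓ hℓ => hψ₀ (div_nonneg hℓ hl)
  · have := hgp hx hy hxy
    have := hgm hx hy hxy
    gcongr
  · have := sub_nonneg.2 (hgp₁ ℓ)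
    have := sub_nonneg.2 (hgm₁ ℓ)
    positivity

theorem continuousOn_shrink (hgp : ContinuousOn gp (Ici 0)) (hgm : ContinuousOn gm (Ici 0))
    (hψ : ContinuousOn ψ (Ici 0)) (hl : 0 ≤ lcrit) :
    ContinuousOn (fun ℓ => ((1 - gp ℓ) + (1 - gm ℓ) / vs) * ψ (ℓ / lcrit)) (Ici 0) :=
  ContinuousOn.mul (by fun_prop)
    (hψ.comp (continuousOn_id.div_const lcrit) fun ℓ hℓ => div_nonneg hℓ hl)

end Balance

theorem stmt6_general
    (α : ℝ) (hα : 1 ≤ α)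
    (ψ : ℝ → ℝ) (hψ0 : ψ 0 = 0)
    (hψ : ∀ x : ℝ, 0 < x → ψ x = Real.exp (-((Real.Gamma (1 + 1/α) / x) ^ α)))
    (φ : ℝ → ℝ) (hφc : ContinuousOn φ (Set.Ici 0)) (hφm : MonotoneOn φ (Set.Ici 0))
    (vp vg vs fhalf lcrit l0 lamp lamm lammin : ℝ)
    (hvp : 0 < vp) (hvg : 0 < vg) (hvs : 0 < vs)
    (hfh : 0 < fhalf) (hlc : 0 < lcrit) (hl0 : 0 < l0)
    (hlamp : 0 < lamp) (hlamm : 0 < lamm) (hlammin : 0 < lammin)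
    (ηp ηm : ℝ) (hηp : 0 ≤ ηp) (hηm : 0 ≤ ηm)
    (N : ℕ) (hN : 0 < N)
    (T : ℝ) (hT : (N : ℝ) * l0 < T)
    (gp gm : ℝ → ℝ)
    (hgp : ∀ ℓ, gp ℓ = 1 / (1 + max lammin ((1 + ηp * φ (ℓ / l0)) * lamp)))
    (hgm : ∀ ℓ, gm ℓ = 1 / (1 + max lammin ((1 + ηm * φ (ℓ / l0)) * lamm)))
    (h1 h0 : ℝ → ℝ)
    (hh1 : ∀ ℓ, h1 ℓ = vp * (gp ℓ + gm ℓ / vg) * ((T - (N : ℝ) * ℓ) / (fhalf + (T - (N : ℝ) * ℓ))))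
    (hh0 : ∀ ℓ, h0 ℓ = ((1 - gp ℓ) + (1 - gm ℓ) / vs) * ψ (ℓ / lcrit)) :
    ∃ lstar ∈ Set.Ioo 0 (T / (N : ℝ)),
      h1 lstar = h0 lstar ∧
      (∀ ℓ ∈ Set.Ioo 0 (T / (N : ℝ)), h1 ℓ = h0 ℓ → ℓ = lstar) ∧
      StrictAntiOn (fun ℓ => h1 ℓ - h0 ℓ) (Set.Icc 0 (T / (N : ℝ))) ∧
      (∀ ℓ ∈ Set.Ico 0 lstar, 0 < h1 ℓ - h0 ℓ) ∧
      (∀ ℓ ∈ Set.Ioc lstar (T / (N : ℝ)), h1 ℓ - h0 ℓ < 0) := by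
  have hα0 : 0 < α := by linarith
  have hN0 : (0 : ℝ) < N := Nat.cast_pos.2 hN
  have hT0 : 0 < T := (by positivity : (0 : ℝ) < N * l0).trans hT
  have hc : 0 < Gamma (1 + 1 / α) := Gamma_pos_of_pos (by positivity)
  obtain rfl : gp = gStar φ lammin ηp lamp l0 := funext hgp
  obtain rfl : gm = gStar φ lammin ηm lamm l0 := funext hgm
  have hgpA := gStar_antitoneOn hφm hlammin.le hηp hlamp.le hl0.le
  have hgmA := gStar_antitoneOn hφm hlammin.le hηm hlamm.le hl0.le
  have hanti : StrictAntiOn (fun ℓ => h1 ℓ - h0 ℓ) (Icc 0 (T / N)) := by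
    simp only [hh1, hh0, sub_eq_add_neg]
    refine (strictAntiOn_growth hgpA hgmA (gStar_pos hlammin.le) (gStar_pos hlammin.le) hvp hvg
      hfh hN0).add_antitone (MonotoneOn.neg (MonotoneOn.mono ?_ Icc_subset_Ici_self))
    exact monotoneOn_shrink hgpA hgmA (fun ℓ => (gStar_lt_one hlammin ℓ).le)
      (fun ℓ => (gStar_lt_one hlammin ℓ).le) hvs
      (monotoneOn_of_eq_exp_neg_div_rpow hc.le hα0.le hψ0 hψ)
      (nonneg_of_eq_exp_neg_div_rpow hψ0 hψ) hlc.le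
  have hcont : ContinuousOn (fun ℓ => h1 ℓ - h0 ℓ) (Icc 0 (T / N)) := by
    have hgpC := gStar_continuousOn (η := ηp) (lam := lamp) hφc hlammin.le hl0.le
    have hgmC := gStar_continuousOn (η := ηm) (lam := lamm) hφc hlammin.le hl0.le
    simp only [hh1, hh0]
    exact (continuousOn_growth hgpC hgmC hfh hN0).sub ((continuousOn_shrink hgpC hgmC
      (continuousOn_of_eq_exp_neg_div_rpow hc hα0 hψ0 hψ) hlc.le).mono Icc_subset_Ici_self)
  have hstart : 0 < h1 0 - h0 0 := by
    rw [hh1, hh0, zero_div, hψ0, mul_zero, sub_zero, mul_zero, sub_zero]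
    exact mul_pos (mul_pos hvp (add_pos (gStar_pos hlammin.le 0)
      (div_pos (gStar_pos hlammin.le 0) hvg))) (div_pos hT0 (by positivity))
  have hend : h1 (T / N) - h0 (T / N) < 0 := by
    rw [hh1, hh0, mul_div_cancel₀ T hN0.ne', sub_self, zero_div, mul_zero, zero_sub, neg_lt_zero]
    exact mul_pos (add_pos (sub_pos.2 (gStar_lt_one hlammin _))
      (div_pos (sub_pos.2 (gStar_lt_one hlammin _)) hvs))
      (hψ (T / N / lcrit) (by positivity) ▸ exp_pos _)
  obtain ⟨x, hx, hx0, huniq, hpos, hneg⟩ :=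
    hanti.exists_sign_change (by positivity) hcont hstart hend
  exact ⟨x, hx, sub_eq_zero.1 hx0, fun y hy hy0 => huniq y hy (sub_eq_zero.2 hy0), hanti, hpos,
    hneg⟩

/-- there is a unique `ℓ_* ∈ (0, T̃/N)` with `h₁(ℓ_*) = h₀(ℓ_*)`;
moreover `h = h₁ - h₀` is strictly decreasing on `[0, T̃/N]`, positive on
`[0, ℓ_*)` and negative on `(ℓ_*, T̃/N]`. -/
theorem stmt6
    (α : ℝ) (hα : 1 ≤ α)
    (ψ : ℝ → ℝ) (hψ0 : ψ 0 = 0)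
    (hψ : ∀ x : ℝ, 0 < x → ψ x = Real.exp (-((Real.Gamma (1 + 1/α) / x) ^ α)))
    (φ : ℝ → ℝ) (hφc : ContinuousOn φ (Set.Ici 0)) (hφm : MonotoneOn φ (Set.Ici 0))
    (hφ0 : φ 0 = -1) (hφ1 : φ 1 = 0)
    (δsp vp vg vs fhalf lcrit l0 lamp lamm lamsg lammin : ℝ)
    (hδsp : 0 < δsp) (hvp : 0 < vp) (hvg : 0 < vg) (hvs : 0 < vs)
    (hfh : 0 < fhalf) (hlc : 0 < lcrit) (hl0 : 0 < l0)
    (hlamp : 0 < lamp) (hlamm : 0 < lamm) (hlamsg : 0 < lamsg) (hlammin : 0 < lammin)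
    (ηp ηm : ℝ) (hηp : 0 ≤ ηp) (hηm : 0 ≤ ηm)
    (N : ℕ) (hN : 0 < N)
    (T : ℝ) (hT : (N : ℝ) * l0 < T)
    (gp gm : ℝ → ℝ)
    (hgp : ∀ ℓ, gp ℓ = 1 / (1 + max lammin ((1 + ηp * φ (ℓ / l0)) * lamp)))
    (hgm : ∀ ℓ, gm ℓ = 1 / (1 + max lammin ((1 + ηm * φ (ℓ / l0)) * lamm)))
    (h1 h0 : ℝ → ℝ)
    (hh1 : ∀ ℓ, h1 ℓ = vp * (gp ℓ + gm ℓ / vg) * ((T - (N : ℝ) * ℓ) / (fhalf + (T - (N : ℝ) * ℓ))))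
    (hh0 : ∀ ℓ, h0 ℓ = ((1 - gp ℓ) + (1 - gm ℓ) / vs) * ψ (ℓ / lcrit)) :
    ∃ lstar ∈ Set.Ioo 0 (T / (N : ℝ)),
      h1 lstar = h0 lstar ∧
      (∀ ℓ ∈ Set.Ioo 0 (T / (N : ℝ)), h1 ℓ = h0 ℓ → ℓ = lstar) ∧
      StrictAntiOn (fun ℓ => h1 ℓ - h0 ℓ) (Set.Icc 0 (T / (N : ℝ))) ∧
      (∀ ℓ ∈ Set.Ico 0 lstar, 0 < h1 ℓ - h0 ℓ) ∧
      (∀ ℓ ∈ Set.Ioc lstar (T / (N : ℝ)), h1 ℓ - h0 ℓ < 0) :=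
  stmt6_general α hα ψ hψ0 hψ φ hφc hφm vp vg vs fhalf lcrit l0 lamp lamm lammin hvp hvg hvs hfh hlc
    hl0 hlamp hlamm hlammin ηp ηm hηp hηm N hN T hT gp gm hgp hgm h1 h0 hh1 hh0
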